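/- Relation between shifted tadpole Nahm sums: for |q|<1, ∑_{i,j,k≥0} q^{i^2+j^2+(k^2-k)/2 - ij - jk - i + j} / ((q;q)_i (q;q)_j (q;q)_k) = 2 ∑_{i,j,k≥0} q^{i^2+j^2+(k^2+k)/2 - ij - jk + i - j} / ((q;q)_i (q;q)_j (q;q)_k). -/

import Mathlib

/-- Finite q-Pochhammer symbol `(a;q)_n`. -/
noncomputable def qPoch (a q : ℂ) (n : ℕ) : ℂ := ∏ k ∈ Finset.range n, (1 - a * q ^ k)

/-!
Write `T(α, β, γ) = ∑ q^(i² + j² + C(k,2) - ij - jk + αi + βj + γk) / ((q)_i (q)_j (q)_k)`.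
Multiplying the summand by `1 - q^i` and using `(1 - q^(i+1)) / (q)_(i+1) = 1 / (q)_i`
gives `T(α, β, γ) - T(α + 1, β, γ) = q^(1 + α) T(α + 2, β - 1, γ)`, and likewise in `j` and `k`
(the shift of the linear form is a row of the tadpole matrix). The two sums of the theorem are
`T(-1, 1, 0)` and `T(1, -1, 1)`, and five of these recurrences, at points where the power of `q`
is `q⁰`, combine linearly into `T(-1, 1, 0) = 2 T(1, -1, 1)`.
-/

section QPochhammer

variable {q : ℂ}

theorem qPoch_succ (n : ℕ) : qPoch q q (n + 1) = qPoch q q n * (1 - q ^ (n + 1)) := by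
  rw [qPoch, Finset.prod_range_succ, ← pow_succ']
  rfl

theorem one_sub_norm_pow_le_norm_qPoch (hq : ‖q‖ < 1) (n : ℕ) :
    (1 - ‖q‖) ^ n ≤ ‖qPoch q q n‖ := by
  rw [qPoch, norm_prod]
  calc (1 - ‖q‖) ^ n = ∏ _m ∈ Finset.range n, (1 - ‖q‖) := by simp
    _ ≤ _ := Finset.prod_le_prod (fun _ _ => by linarith) fun m _ => ?_
  calc 1 - ‖q‖ ≤ 1 - ‖q * q ^ m‖ := by
        rw [norm_mul, norm_pow]
        nlinarith [pow_le_one₀ (norm_nonneg q) hq.le (n := m), norm_nonneg q]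
    _ ≤ ‖1 - q * q ^ m‖ := by simpa using norm_sub_norm_le (1 : ℂ) (q * q ^ m)

theorem qPoch_ne_zero (hq : ‖q‖ < 1) (n : ℕ) : qPoch q q n ≠ 0 :=
  norm_pos_iff.mp ((pow_pos (by linarith) n).trans_le (one_sub_norm_pow_le_norm_qPoch hq n))

end QPochhammer

noncomputable def qPochTriple (q : ℂ) (p : ℕ × ℕ × ℕ) : ℂ :=
  qPoch q q p.1 * qPoch q q p.2.1 * qPoch q q p.2.2

noncomputable def nahmTerm (q : ℂ) (E : ℕ × ℕ × ℕ → ℤ) (p : ℕ × ℕ × ℕ) : ℂ :=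
  q ^ E p / qPochTriple q p

noncomputable def nahmSum (q : ℂ) (E : ℕ × ℕ × ℕ → ℤ) : ℂ := ∑' p, nahmTerm q E p

theorem tsum_prod_prod_eq_tsum_tsum_tsum {α β γ E : Type*} [NormedAddCommGroup E]
    [CompleteSpace E] {f : α × β × γ → E} (hf : Summable f) :
    ∑' p, f p = ∑' (a : α) (b : β) (c : γ), f (a, b, c) := by
  rw [hf.tsum_prod]
  exact tsum_congr fun a => (hf.prod_factor a).tsum_prod

theorem summable_geometric_triple {w : ℝ} (hw0 : 0 ≤ w) (hw1 : w < 1) :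
    Summable fun p : ℕ × ℕ × ℕ => w ^ (p.1 + p.2.1 + p.2.2) := by
  have hgeo := summable_geometric_of_lt_one hw0 hw1
  have hnonneg : 0 ≤ fun n : ℕ => w ^ n := fun n => pow_nonneg hw0 n
  have h3 := hgeo.mul_of_nonneg (hgeo.mul_of_nonneg hgeo hnonneg hnonneg) hnonneg
    fun y => mul_nonneg (hnonneg y.1) (hnonneg y.2)
  simpa only [pow_add, mul_assoc] using h3

section NahmSum

variable {q : ℂ}

theorem norm_nahmTerm_le (hq : ‖q‖ < 1) (E : ℕ × ℕ × ℕ → ℤ) (p : ℕ × ℕ × ℕ) :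
    ‖nahmTerm q E p‖ ≤ ‖q‖ ^ E p / (1 - ‖q‖) ^ (p.1 + p.2.1 + p.2.2) := by
  have h1q : 0 < 1 - ‖q‖ := by linarith
  rw [nahmTerm, qPochTriple, norm_div, norm_zpow, norm_mul, norm_mul, pow_add, pow_add]
  gcongr <;> exact one_sub_norm_pow_le_norm_qPoch hq _

theorem summable_nahmTerm (hq0 : q ≠ 0) (hq : ‖q‖ < 1) {E : ℕ × ℕ × ℕ → ℤ}
    (hE : ∀ c : ℕ, ∃ D : ℤ, ∀ p : ℕ × ℕ × ℕ, c * ((p.1 + p.2.1 + p.2.2 : ℕ) : ℤ) - D ≤ E p) :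
    Summable (nahmTerm q E) := by
  set r := ‖q‖
  have hr0 : 0 < r := norm_pos_iff.mpr hq0
  have h1r : 0 < 1 - r := by linarith
  obtain ⟨c, hc⟩ := exists_pow_lt_of_lt_one h1r hq
  obtain ⟨D, hD⟩ := hE c
  have hw := summable_geometric_triple (w := r ^ c / (1 - r)) (by positivity)
    ((div_lt_one h1r).mpr hc)
  refine (hw.mul_left (r ^ (-D))).of_norm_bounded fun p => ?_
  set n := p.1 + p.2.1 + p.2.2
  calc ‖nahmTerm q E p‖ ≤ r ^ E p / (1 - r) ^ n := norm_nahmTerm_le hq E p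
    _ ≤ r ^ (c * (n : ℤ) - D) / (1 - r) ^ n :=
        div_le_div_of_nonneg_right (zpow_le_zpow_right_of_le_one₀ hr0 hq.le (hD p))
          (by positivity)
    _ = r ^ (-D) * (r ^ c / (1 - r)) ^ n := by
        rw [sub_eq_neg_add, zpow_add₀ hr0.ne', ← Nat.cast_mul, zpow_natCast, pow_mul, div_pow]
        ring

theorem nahmTerm_comp_equiv (σ : ℕ × ℕ × ℕ ≃ ℕ × ℕ × ℕ)
    (hσ : ∀ p, qPochTriple q (σ p) = qPochTriple q p) (E : ℕ × ℕ × ℕ → ℤ) :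
    nahmTerm q (E ∘ σ) = nahmTerm q E ∘ σ :=
  funext fun p => by simp only [nahmTerm, Function.comp_apply, hσ]

theorem nahmSum_eq_add_of_shift_fst (hq0 : q ≠ 0) (hq : ‖q‖ < 1) {E E₁ E' : ℕ × ℕ × ℕ → ℤ}
    {c : ℤ} (hE₁ : ∀ p, E₁ p = E p + p.1) (hE' : ∀ p, E (p.1 + 1, p.2) = c + E' p)
    (hs : Summable (nahmTerm q E)) (hs₁ : Summable (nahmTerm q E₁)) :
    nahmSum q E = nahmSum q E₁ + q ^ c * nahmSum q E' := by
  have hdiff : nahmSum q E - nahmSum q E₁ = ∑' p, nahmTerm q E p * (1 - q ^ p.1) := by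
    rw [nahmSum, nahmSum, ← hs.tsum_sub hs₁]
    refine tsum_congr fun p => ?_
    rw [nahmTerm, nahmTerm, hE₁, zpow_add₀ hq0, zpow_natCast]
    ring
  have hsucc : Function.Injective fun p : ℕ × ℕ × ℕ => (p.1 + 1, p.2) :=
    fun p p' h => by
      simp only [Prod.mk.injEq] at h
      exact Prod.ext (by omega) h.2
  have hshift : ∑' p, nahmTerm q E p * (1 - q ^ p.1)
      = ∑' p : ℕ × ℕ × ℕ, nahmTerm q E (p.1 + 1, p.2) * (1 - q ^ (p.1 + 1)) := by
    refine (hsucc.tsum_eq fun p hp => ?_).symm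
    rcases p with ⟨_ | i, x⟩
    · simp at hp
    · exact ⟨(i, x), rfl⟩
  have hterm (p : ℕ × ℕ × ℕ) :
      nahmTerm q E (p.1 + 1, p.2) * (1 - q ^ (p.1 + 1)) = q ^ c * nahmTerm q E' p := by
    have hne := qPoch_ne_zero hq (p.1 + 1)
    rw [qPoch_succ] at hne
    have := left_ne_zero_of_mul hne
    have := right_ne_zero_of_mul hne
    have := qPoch_ne_zero hq p.2.1
    have := qPoch_ne_zero hq p.2.2
    rw [nahmTerm, nahmTerm, qPochTriple, qPochTriple, hE', zpow_add₀ hq0, qPoch_succ]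
    field_simp
  rw [← sub_eq_iff_eq_add', hdiff, hshift, tsum_congr hterm, nahmSum, tsum_mul_left]

/-- The shifted coordinate is the one that `σ` brings to the front. -/
theorem nahmSum_eq_add_of_shift (hq0 : q ≠ 0) (hq : ‖q‖ < 1) (σ : ℕ × ℕ × ℕ ≃ ℕ × ℕ × ℕ)
    (hσ : ∀ p, qPochTriple q (σ p) = qPochTriple q p) {E E₁ E' : ℕ × ℕ × ℕ → ℤ} {c : ℤ}
    (hE₁ : ∀ p, E₁ (σ p) = E (σ p) + p.1) (hE' : ∀ p, E (σ (p.1 + 1, p.2)) = c + E' (σ p))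
    (hs : Summable (nahmTerm q E)) (hs₁ : Summable (nahmTerm q E₁)) :
    nahmSum q E = nahmSum q E₁ + q ^ c * nahmSum q E' := by
  have hsum (F : ℕ × ℕ × ℕ → ℤ) : nahmSum q (F ∘ σ) = nahmSum q F := by
    rw [nahmSum, nahmTerm_comp_equiv σ hσ]
    exact σ.tsum_eq (nahmTerm q F)
  have hsummable {F : ℕ × ℕ × ℕ → ℤ} (hF : Summable (nahmTerm q F)) :
      Summable (nahmTerm q (F ∘ σ)) := by
    rwa [nahmTerm_comp_equiv σ hσ, σ.summable_iff]
  rw [← hsum E, ← hsum E₁, ← hsum E']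
  exact nahmSum_eq_add_of_shift_fst hq0 hq hE₁ hE' (hsummable hs) (hsummable hs₁)

end NahmSum

theorem two_mul_cast_choose_two (k : ℕ) : 2 * (k.choose 2 : ℤ) = (k : ℤ) ^ 2 - k := by
  induction k with
  | zero => simp
  | succ k ih =>
    rw [Nat.choose_succ_succ', Nat.choose_one_right]
    push_cast
    linear_combination ih

theorem sq_sub_self_ediv_two (k : ℕ) : ((k : ℤ) ^ 2 - k) / 2 = k.choose 2 :=
  Int.ediv_eq_of_eq_mul_left two_ne_zero (by linear_combination -two_mul_cast_choose_two k)

theorem sq_add_self_ediv_two (k : ℕ) : ((k : ℤ) ^ 2 + k) / 2 = k.choose 2 + k :=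
  Int.ediv_eq_of_eq_mul_left two_ne_zero (by linear_combination -two_mul_cast_choose_two k)

/-- With this exponent, `nahmSum q (tadpoleExp α β γ)` is `χ₀(q^α, q^β, q^(γ - 1/2); q)`. -/
def tadpoleExp (α β γ : ℤ) : ℕ × ℕ × ℕ → ℤ
  | (i, j, k) =>
    (i : ℤ) ^ 2 + (j : ℤ) ^ 2 + (k.choose 2 : ℤ) - i * j - j * k + α * i + β * j + γ * k

/-- `2 · tadpoleExp` has quadratic part `i² + (i - j)² + (j - k)²`, which beats any linear form. -/
theorem tadpoleExp_growth (α β γ : ℤ) (c : ℕ) :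
    ∃ D : ℤ, ∀ p : ℕ × ℕ × ℕ, c * ((p.1 + p.2.1 + p.2.2 : ℕ) : ℤ) - D ≤ tadpoleExp α β γ p := by
  set a := 2 * c - 2 * α + (2 * c - 2 * β) + (2 * c - 2 * γ + 1)
  set b := 2 * c - 2 * β + (2 * c - 2 * γ + 1)
  set d := 2 * c - 2 * γ + 1
  refine ⟨a ^ 2 + b ^ 2 + d ^ 2, fun ⟨i, j, k⟩ => ?_⟩
  have := two_mul_cast_choose_two k
  simp only [tadpoleExp]
  push_cast
  nlinarith [sq_nonneg (2 * (i : ℤ) - a), sq_nonneg (2 * ((i : ℤ) - j) + b),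
    sq_nonneg (2 * ((j : ℤ) - k) + d), sq_nonneg a, sq_nonneg b, sq_nonneg d]

noncomputable def tadpoleSum (q : ℂ) (α β γ : ℤ) : ℂ := nahmSum q (tadpoleExp α β γ)

section Tadpole

variable {q : ℂ} (hq0 : q ≠ 0) (hq : ‖q‖ < 1)
include hq0 hq

theorem summable_tadpole (α β γ : ℤ) : Summable (nahmTerm q (tadpoleExp α β γ)) :=
  summable_nahmTerm hq0 hq (tadpoleExp_growth α β γ)

theorem tadpoleSum_eq_add_i (α β γ : ℤ) :
    tadpoleSum q α β γ
      = tadpoleSum q (α + 1) β γ + q ^ (1 + α) * tadpoleSum q (α + 2) (β - 1) γ :=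
  nahmSum_eq_add_of_shift hq0 hq (Equiv.refl _) (fun _ => rfl)
    (by rintro ⟨i, j, k⟩; simp only [Equiv.refl_apply, tadpoleExp]; ring)
    (by rintro ⟨i, j, k⟩; simp only [Equiv.refl_apply, tadpoleExp]; push_cast; ring)
    (summable_tadpole hq0 hq _ _ _) (summable_tadpole hq0 hq _ _ _)

theorem tadpoleSum_eq_add_j (α β γ : ℤ) :
    tadpoleSum q α β γ
      = tadpoleSum q α (β + 1) γ + q ^ (1 + β) * tadpoleSum q (α - 1) (β + 2) (γ - 1) :=
  nahmSum_eq_add_of_shift hq0 hq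
    ⟨fun p => (p.2.1, p.1, p.2.2), fun p => (p.2.1, p.1, p.2.2), fun _ => rfl, fun _ => rfl⟩
    (fun _ => by simp only [Equiv.coe_fn_mk, qPochTriple]; ring)
    (by rintro ⟨i, j, k⟩; simp only [Equiv.coe_fn_mk, tadpoleExp]; ring)
    (by rintro ⟨i, j, k⟩; simp only [Equiv.coe_fn_mk, tadpoleExp]; push_cast; ring)
    (summable_tadpole hq0 hq _ _ _) (summable_tadpole hq0 hq _ _ _)

theorem tadpoleSum_eq_add_k (α β γ : ℤ) :
    tadpoleSum q α β γ
      = tadpoleSum q α β (γ + 1) + q ^ γ * tadpoleSum q α (β - 1) (γ + 1) :=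
  nahmSum_eq_add_of_shift hq0 hq
    ⟨fun p => (p.2.1, p.2.2, p.1), fun p => (p.2.2, p.1, p.2.1), fun _ => rfl, fun _ => rfl⟩
    (fun _ => by simp only [Equiv.coe_fn_mk, qPochTriple]; ring)
    (by rintro ⟨i, j, k⟩; simp only [Equiv.coe_fn_mk, tadpoleExp]; ring)
    (by
      rintro ⟨i, j, k⟩
      simp only [Equiv.coe_fn_mk, tadpoleExp, Nat.choose_succ_succ', Nat.choose_one_right]
      push_cast
      ring)
    (summable_tadpole hq0 hq _ _ _) (summable_tadpole hq0 hq _ _ _)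

theorem tadpoleSum_eq_tsum (α β γ : ℤ) :
    tadpoleSum q α β γ = ∑' (i : ℕ) (j : ℕ) (k : ℕ),
      q ^ tadpoleExp α β γ (i, j, k) / (qPoch q q i * qPoch q q j * qPoch q q k) :=
  tsum_prod_prod_eq_tsum_tsum_tsum (summable_tadpole hq0 hq α β γ)

theorem tadpoleSum_relation : tadpoleSum q (-1) 1 0 = 2 * tadpoleSum q 1 (-1) 1 := by
  have h1 := tadpoleSum_eq_add_k hq0 hq 0 1 0
  have h2 := tadpoleSum_eq_add_j hq0 hq 1 (-1) 1
  have h3 := tadpoleSum_eq_add_i hq0 hq (-1) 1 1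
  have h4 := tadpoleSum_eq_add_i hq0 hq (-1) 0 1
  have h5 := tadpoleSum_eq_add_k hq0 hq (-1) 1 0
  norm_num at h1 h2 h3 h4 h5
  linear_combination h5 + h3 + h4 - h1 - h2

end Tadpole

/-- Relation `χ₀(q⁻¹,q,q^{-1/2};q) = 2 χ₀(q,q⁻¹,q^{1/2};q)` between shifted
    rank-3 tadpole Nahm sums. -/
theorem nahm_relation_1 (q : ℂ) (hq0 : q ≠ 0) (hq : ‖q‖ < 1) :
    ∑' (i : ℕ) (j : ℕ) (k : ℕ),
        q ^ ((i : ℤ) ^ 2 + (j : ℤ) ^ 2 + ((k : ℤ) ^ 2 - (k : ℤ)) / 2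
              - (i : ℤ) * (j : ℤ) - (j : ℤ) * (k : ℤ) - (i : ℤ) + (j : ℤ))
          / (qPoch q q i * qPoch q q j * qPoch q q k)
      = 2 * ∑' (i : ℕ) (j : ℕ) (k : ℕ),
            q ^ ((i : ℤ) ^ 2 + (j : ℤ) ^ 2 + ((k : ℤ) ^ 2 + (k : ℤ)) / 2
                  - (i : ℤ) * (j : ℤ) - (j : ℤ) * (k : ℤ) + (i : ℤ) - (j : ℤ))
              / (qPoch q q i * qPoch q q j * qPoch q q k) := by
  have key := tadpoleSum_relation hq0 hq
  rw [tadpoleSum_eq_tsum hq0 hq, tadpoleSum_eq_tsum hq0 hq] at key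
  refine (Eq.trans ?_ key).trans (congrArg (2 * ·) ?_)
  all_goals
    refine tsum_congr fun i => tsum_congr fun j => tsum_congr fun k => ?_
    simp only [tadpoleExp, sq_sub_self_ediv_two, sq_add_self_ediv_two]
    ring_nf
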